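/- arXiv:2510.14426 — 3 statements merged into one kernel-verified Lean document; each statement's English description precedes it below -/
import Mathlib

section
/- Let N ≥ 3 and 3 ≤ k ≤ N. Let P be an N×(N-1) complex matrix, let Q be an N×(N-k+1) complex matrix obtained from P by removing k-2 of its columns, and let a_1, ..., a_k be column vectors in ℂ^N. Then ∑_{i=1}^{k} (−1)^{i−1} det(P, a_i) · det(Q, a_1, ..., a_{i−1}, a_{i+1}, ..., a_k) = 0. -/
/-
Let `f(x) = det (P, x)`; it is a linear form `c ⬝ᵥ x` on `ℂ^N` (a row of an adjugate) and it
vanishes on every column of `P`. Put the `N + 1` vectors `v` = (columns of `Q`, `a₁, …, a_k`)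
as the columns of an `(N + 1) × (N + 1)` matrix whose first row is `f(v)`. That row is the
combination `c` of the others, so the determinant vanishes; its Laplace expansion along the first
row is, up to the sign `(-1)^(N - k + 1)`, the alternating sum of the theorem, since the terms
coming from columns of `Q` vanish.
-/

open Matrix

/-- The N×N matrix obtained from an N×r matrix `P` by adjoining the
`N - r` column vectors `v` as the last columns. -/
noncomputable def adjoinCols {N r : ℕ} (P : Matrix (Fin N) (Fin r) ℂ)
    (v : Fin (N - r) → Fin N → ℂ) : Matrix (Fin N) (Fin N) ℂ :=
  Matrix.of fun i j =>
    if hj : (j : ℕ) < r then P i ⟨j, hj⟩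
    else v ⟨(j : ℕ) - r, by have := j.isLt; omega⟩ i

section Laplace

variable {R : Type*} [CommRing R] {m : ℕ}

theorem sum_neg_one_pow_mul_dotProduct_mul_det_succAbove_eq_zero
    (c : Fin m → R) (v : Fin (m + 1) → Fin m → R) :
    ∑ p : Fin (m + 1), (-1 : R) ^ (p : ℕ) *
      ((c ⬝ᵥ v p) * (of fun r j => v (p.succAbove j) r).det) = 0 := by
  set B : Matrix (Fin (m + 1)) (Fin (m + 1)) R :=
    of fun i p => (Fin.cons (c ⬝ᵥ v p) (v p) : Fin (m + 1) → R) i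
  have hrow : B 0 = ∑ i, (Fin.cons 0 c : Fin (m + 1) → R) i • B i := by
    ext p
    simp [B, Fin.sum_univ_succ, dotProduct]
  have hdet : B.det = 0 := by
    rw [← updateRow_eq_self B 0, hrow, det_updateRow_sum]
    simp
  rw [det_succ_row_zero] at hdet
  simp only [B, of_apply, Fin.cons_zero, mul_assoc] at hdet
  exact hdet

theorem sum_neg_one_pow_mul_dotProduct_mul_det_succAbove_eq_zero_of_dotProduct_eq_zero
    {l k : ℕ} (hlk : l + k = m + 1) (c : Fin m → R) (v : Fin (m + 1) → Fin m → R)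
    (hv : ∀ p : Fin (m + 1), (p : ℕ) < l → c ⬝ᵥ v p = 0) :
    ∑ i : Fin k, (-1 : R) ^ (i : ℕ) *
      ((c ⬝ᵥ v ⟨l + i, by omega⟩) *
        (of fun r j => v ((⟨l + i, by omega⟩ : Fin (m + 1)).succAbove j) r).det) = 0 := by
  have h := sum_neg_one_pow_mul_dotProduct_mul_det_succAbove_eq_zero c v
  rw [← Fintype.sum_equiv (finCongr hlk) _ _ fun _ => rfl, Fin.sum_univ_add,
    Finset.sum_eq_zero fun j _ => by rw [hv _ j.isLt, zero_mul, mul_zero], zero_add] at h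
  simp only [finCongr_apply, Fin.val_cast, Fin.val_natAdd, pow_add, mul_assoc,
    ← Finset.mul_sum] at h
  exact ((isUnit_neg_one.pow l).mul_right_eq_zero).mp h

end Laplace

section AdjoinCols

variable {N : ℕ} (P : Matrix (Fin N) (Fin (N - 1)) ℂ)

theorem adjoinCols_eq_updateCol (hN : 0 < N) (x y : Fin N → ℂ) :
    adjoinCols P (fun _ => x) = (adjoinCols P fun _ => y).updateCol ⟨N - 1, by omega⟩ x := by
  ext i j
  by_cases hj : (j : ℕ) < N - 1
  · simp [adjoinCols, hj, Fin.ext_iff, hj.ne]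
  · have hj' : (j : ℕ) = N - 1 := by omega
    simp [adjoinCols, updateCol_apply, Fin.ext_iff, hj']

theorem det_adjoinCols_eq_dotProduct (hN : 0 < N) (x y : Fin N → ℂ) :
    (adjoinCols P fun _ => x).det = (adjoinCols P fun _ => y).adjugate ⟨N - 1, by omega⟩ ⬝ᵥ x := by
  rw [adjoinCols_eq_updateCol P hN x y, ← cramer_apply, cramer_eq_adjugate_mulVec]
  rfl

theorem det_adjoinCols_col (t : Fin (N - 1)) : (adjoinCols P fun _ r => P r t).det = 0 := by
  have ht := t.isLt
  refine det_zero_of_column_eq (i := ⟨t, by omega⟩) (j := ⟨N - 1, by omega⟩) ?_ fun r => ?_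
  · simp [Fin.ext_iff, ht.ne]
  · simp [adjoinCols, ht]

end AdjoinCols

section ColsAppend

variable {α : Type*} {N k : ℕ} (hkN : k ≤ N) (Q : Matrix (Fin N) (Fin (N - k + 1)) α)
  (a : Fin k → Fin N → α)

def colsAppend : Fin (N + 1) → Fin N → α := fun p r =>
  if hp : (p : ℕ) < N - k + 1 then Q r ⟨p, hp⟩ else a ⟨p - (N - k + 1), by omega⟩ r

theorem colsAppend_of_lt {p : Fin (N + 1)} (hp : (p : ℕ) < N - k + 1) :
    colsAppend hkN Q a p = fun r => Q r ⟨p, hp⟩ :=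
  funext fun _ => dif_pos hp

theorem colsAppend_add (i : Fin k) :
    colsAppend hkN Q a ⟨N - k + 1 + i, by omega⟩ = a i := by
  funext r
  rw [colsAppend, dif_neg (by simp only; omega)]
  simp

end ColsAppend

theorem of_colsAppend_succAbove {N k : ℕ} (hkN : k ≤ N) (Q : Matrix (Fin N) (Fin (N - k + 1)) ℂ)
    (a : Fin k → Fin N → ℂ) (i : Fin k) :
    (of fun r j => colsAppend hkN Q a ((⟨N - k + 1 + i, by omega⟩ : Fin (N + 1)).succAbove j) r) =
      adjoinCols Q (fun t => a ⟨if (t : ℕ) < (i : ℕ) then (t : ℕ) else (t : ℕ) + 1,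
        by split_ifs <;> omega⟩) := by
  ext r j
  rcases lt_or_ge (j : ℕ) (N - k + 1 + i) with hj | hj
  · rw [of_apply, Fin.succAbove_of_castSucc_lt _ _ (Fin.lt_def.mpr (by exact hj))]
    simp only [colsAppend, adjoinCols, of_apply, Fin.val_castSucc]
    split_ifs <;> first | rfl | omega
  · rw [of_apply, Fin.succAbove_of_le_castSucc _ _ (Fin.le_def.mpr (by exact hj))]
    simp only [colsAppend, adjoinCols, of_apply, Fin.val_succ]
    split_ifs <;> first | rfl | omega | (congr 2; omega)

/-- The generalized Plücker relation (Proposition 2.2): `Q` is obtained from `P`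
by removing `k - 2` columns (encoded by a strictly monotone column selection `ι`). -/
theorem stmt2 (N k : ℕ) (hkN : k ≤ N)
    (P : Matrix (Fin N) (Fin (N - 1)) ℂ)
    (ι : Fin (N - k + 1) → Fin (N - 1))
    (a : Fin k → Fin N → ℂ) :
    ∑ i : Fin k,
      (-1 : ℂ) ^ (i : ℕ) *
        ((adjoinCols P (fun _ => a i)).det *
          (adjoinCols (Matrix.of fun r j => P r (ι j))
            (fun t => a ⟨if (t : ℕ) < (i : ℕ) then (t : ℕ) else (t : ℕ) + 1,
              by have := t.isLt; split_ifs <;> omega⟩)).det) = 0 := by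
  rcases Nat.eq_zero_or_pos k with rfl | hk
  · simp
  have hN : 0 < N := by omega
  have key := sum_neg_one_pow_mul_dotProduct_mul_det_succAbove_eq_zero_of_dotProduct_eq_zero
    (by omega : N - k + 1 + k = N + 1) ((adjoinCols P fun _ => 0).adjugate ⟨N - 1, by omega⟩)
    (colsAppend hkN (of fun r j => P r (ι j)) a) fun p hp => by
      rw [colsAppend_of_lt hkN _ a hp, ← det_adjoinCols_eq_dotProduct P hN]
      exact det_adjoinCols_col P _
  simpa only [colsAppend_add, of_colsAppend_succAbove, ← det_adjoinCols_eq_dotProduct P hN]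
    using key
end

section
/- Let Ξ be an N×N complex matrix with columns Ξ_1, ..., Ξ_N, and let Ω be an N×N matrix of complex numbers with columns Ω_1, ..., Ω_N. For a column vector A and column vector B of the same size, let A∘B denote their entrywise (Hadamard) product. Then ∑_{j=1}^N det(Ξ_1, ..., Ξ_{j−1}, Ω_j∘Ξ_j, Ξ_{j+1}, ..., Ξ_N) = ∑_{j=1}^N det((Ξ^T)_1, ..., (Ω^T)_j∘(Ξ^T)_j, ..., (Ξ^T)_N), where (Ξ^T)_j and (Ω^T)_j denote the j-th columns of the transposed matrices. -/
open Matrix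

/-- Proposition 2.1: the column–row summation identity for determinants with
Hadamard-scaled columns. -/
theorem stmt3 {N : ℕ} (Ξ Ω : Matrix (Fin N) (Fin N) ℂ) :
    (∑ j : Fin N, (Matrix.of fun i l =>
        if l = j then Ω i j * Ξ i j else Ξ i l : Matrix (Fin N) (Fin N) ℂ).det) =
    (∑ j : Fin N, (Matrix.of fun i l =>
        if l = j then Ωᵀ i j * Ξᵀ i j else Ξᵀ i l : Matrix (Fin N) (Fin N) ℂ).det) := by
  have key : ∀ (A : Matrix (Fin N) (Fin N) ℂ) (j : Fin N) (b : Fin N → ℂ),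
      (Matrix.of fun i l => if l = j then b i else A i l).det
        = ∑ i, adjugate A j i * b i := by
    intro A j b
    have h1 : (Matrix.of fun i l => if l = j then b i else A i l)
        = A.updateCol j b := by
      ext i l
      simp [Matrix.updateCol_apply]
    rw [h1, ← Matrix.cramer_apply, Matrix.cramer_eq_adjugate_mulVec]
    rfl
  calc (∑ j : Fin N, (Matrix.of fun i l =>
        if l = j then Ω i j * Ξ i j else Ξ i l : Matrix (Fin N) (Fin N) ℂ).det)
      = ∑ j, ∑ i, adjugate Ξ j i * (Ω i j * Ξ i j) := by
        refine Finset.sum_congr rfl fun j _ => ?_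
        exact key Ξ j (fun i => Ω i j * Ξ i j)
    _ = ∑ i, ∑ j, adjugate Ξ j i * (Ω i j * Ξ i j) := by
        rw [Finset.sum_comm]
    _ = ∑ j, ∑ i, adjugate Ξᵀ j i * (Ωᵀ i j * Ξᵀ i j) := by
        refine Finset.sum_congr rfl fun j _ => Finset.sum_congr rfl fun i _ => ?_
        rw [← Matrix.adjugate_transpose]
        simp [Matrix.transpose_apply]
    _ = ∑ j : Fin N, (Matrix.of fun i l =>
        if l = j then Ωᵀ i j * Ξᵀ i j else Ξᵀ i l : Matrix (Fin N) (Fin N) ℂ).det := by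
        refine Finset.sum_congr rfl fun j _ => ?_
        exact (key Ξᵀ j (fun i => Ωᵀ i j * Ξᵀ i j)).symm
end

section
/- Let N ≥ 3 and let φ : ℤ → ℂ^N be a sequence of column vectors, with Casoratians f' = |0,1,...,N−1|, g' = |0,...,N−2, N| (determinants of the N×N matrices with the indicated columns φ(l)). Suppose an operator E and scalar σ ≠ 0 satisfy σ·(Eφ)(l) = φ(l) − (Eφ)(l+1) for all l (the CES shift relation in one direction). Then σ^j (E f') = (−1)^{N+1−j} |φ(0), ..., φ(N−2), (Eφ)(j)| for all 0 ≤ j ≤ N−1, where E f' denotes the Casoratian built from Eφ. -/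
open Matrix

/-- The fundamental Casoratian shift formula (B.1a): if σ·Eφ(l) = φ(l) − Eφ(l+1),
then σ^j times the shifted Casoratian equals, up to sign, the Casoratian with
columns φ(0),…,φ(N−2), Eφ(j). Here ψ = Eφ. -/
theorem stmt17 (N : ℕ) (hN : 3 ≤ N) (σ : ℂ) (hσ : σ ≠ 0)
    (φ ψ : ℤ → Fin N → ℂ)
    (hCES : ∀ l : ℤ, σ • ψ l = φ l - ψ (l + 1)) :
    ∀ j : ℕ, j ≤ N - 1 →
      σ ^ j * (Matrix.of fun i c => ψ ((c : ℕ) : ℤ) i :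
          Matrix (Fin N) (Fin N) ℂ).det =
        (-1 : ℂ) ^ (N + 1 - j) *
          (Matrix.of fun i c =>
            if (c : ℕ) < N - 1 then φ ((c : ℕ) : ℤ) i else ψ (j : ℤ) i :
            Matrix (Fin N) (Fin N) ℂ).det := by
  obtain ⟨m, rfl⟩ : ∃ m, N = m + 1 := ⟨N - 1, by omega⟩
  have hm : 2 ≤ m := by omega
  -- pointwise CES relation
  have hψs : ∀ (l : ℤ) (i : Fin (m + 1)), ψ (l + 1) i = φ l i - σ * ψ l i := by
    intro l i
    have := congrFun (hCES l) i
    simp only [Pi.smul_apply, smul_eq_mul, Pi.sub_apply] at this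
    linear_combination this
  -- the family of matrices with last column ψ(j)
  set M : ℕ → Matrix (Fin (m + 1)) (Fin (m + 1)) ℂ := fun j =>
    Matrix.of fun i c => if (c : ℕ) < m + 1 - 1 then φ ((c : ℕ) : ℤ) i
      else ψ ((j : ℕ) : ℤ) i with hMdef
  set Ψ : Matrix (Fin (m + 1)) (Fin (m + 1)) ℂ :=
    Matrix.of fun i c => ψ ((c : ℕ) : ℤ) i with hΨdef
  have last1 : Fin (m + 1) := ⟨m, by omega⟩
  -- Step 1: recursion det (M (j+1)) = -σ * det (M j) for j < m
  have hrec : ∀ j : ℕ, j < m → (M (j + 1)).det = (-σ) * (M j).det := by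
    intro j hj
    have hupd : M (j + 1) = updateCol (M j) ⟨m, by omega⟩
        ((fun i => φ (j : ℤ) i) + (-σ) • (fun i => ψ (j : ℤ) i)) := by
      ext i c
      by_cases hc : c = (⟨m, by omega⟩ : Fin (m + 1))
      · subst hc
        simp only [hMdef, Matrix.of_apply, updateCol_self, Pi.add_apply,
          Pi.smul_apply, smul_eq_mul]
        rw [if_neg (by simp)]
        have : ((j : ℤ) + 1) = ((j + 1 : ℕ) : ℤ) := by push_cast; ring
        rw [← this, hψs]
        ring
      · have hne : (c : ℕ) ≠ m := fun h => hc (Fin.ext h)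
        rw [updateCol_ne hc]
        simp only [hMdef, Matrix.of_apply, if_pos (show (c:ℕ) < m + 1 - 1 by omega)]
    rw [hupd, det_updateCol_add, det_updateCol_smul]
    have h0 : (updateCol (M j) ⟨m, by omega⟩ (fun i => φ (j : ℤ) i)).det = 0 := by
      apply det_zero_of_column_eq (i := (⟨j, by omega⟩ : Fin (m + 1)))
        (j := ⟨m, by omega⟩)
      · intro h
        have := congrArg Fin.val h
        simp at this; omega
      · intro k
        rw [updateCol_ne (by intro h; have := congrArg Fin.val h; simp at this; omega),
          updateCol_self]
        simp only [hMdef, Matrix.of_apply]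
        rw [if_pos (by simpa using by omega : ((⟨j, by omega⟩ : Fin (m+1)) : ℕ) < m + 1 - 1)]
    have h1 : updateCol (M j) ⟨m, by omega⟩ (fun i => ψ (j : ℤ) i) = M j := by
      ext i c
      by_cases hc : c = (⟨m, by omega⟩ : Fin (m + 1))
      · subst hc
        rw [updateCol_self]
        simp only [hMdef, Matrix.of_apply]
        rw [if_neg (by simp)]
      · rw [updateCol_ne hc]
    rw [h0, h1]
    ring
  have hM : ∀ j : ℕ, j ≤ m → (M j).det = (-σ) ^ j * (M 0).det := by
    intro j
    induction j with
    | zero => intro _; simp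
    | succ k ih =>
      intro hk
      rw [hrec k (by omega), ih (by omega)]
      ring
  -- Step 2: the B family for the base case
  set B : ℕ → Matrix (Fin (m + 1)) (Fin (m + 1)) ℂ := fun k =>
    Matrix.of fun i c => if (c : ℕ) < k then ψ (((c : ℕ) : ℤ) + 1) i
      else if (c : ℕ) < m then φ ((c : ℕ) : ℤ) i else ψ 0 i with hBdef
  have hB0 : B 0 = M 0 := by
    ext i c
    simp only [hBdef, hMdef, Matrix.of_apply, Nat.not_lt_zero, if_false,
      Nat.add_sub_cancel, Nat.cast_zero]
  have hBstep : ∀ k : ℕ, k < m → (B (k + 1)).det = (B k).det := by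
    intro k hk
    set prev : Fin (m + 1) := if k = 0 then ⟨m, by omega⟩ else ⟨k - 1, by omega⟩ with hprev
    have hne : (⟨k, by omega⟩ : Fin (m + 1)) ≠ prev := by
      rcases Nat.eq_zero_or_pos k with h0 | h0
      · subst h0
        simp only [hprev, if_pos rfl]
        intro h; have := congrArg Fin.val h; simp at this; omega
      · simp only [hprev, if_neg (by omega : ¬ k = 0)]
        intro h; have := congrArg Fin.val h; simp at this; omega
    have hprevval : ∀ i, B k i prev = ψ (k : ℤ) i := by
      intro i
      rcases Nat.eq_zero_or_pos k with h0 | h0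
      · subst h0
        simp only [hprev, if_pos rfl, hBdef, Matrix.of_apply]
        rw [if_neg (by simp), if_neg (by simp)]
        norm_num
      · simp only [hprev, if_neg (by omega : ¬ k = 0), hBdef, Matrix.of_apply]
        rw [if_pos (by simp; omega)]
        show ψ (((k - 1 : ℕ) : ℤ) + 1) i = ψ (k : ℤ) i
        congr 1
        omega
    have hupd : B (k + 1) = updateCol (B k) ⟨k, by omega⟩
        (fun i => B k i ⟨k, by omega⟩ + (-σ) • B k i prev) := by
      ext i c
      by_cases hc : c = (⟨k, by omega⟩ : Fin (m + 1))
      · subst hc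
        rw [updateCol_self]
        have hkk : B k i ⟨k, by omega⟩ = φ (k : ℤ) i := by
          simp only [hBdef, Matrix.of_apply]
          rw [if_neg (by simp), if_pos (by simpa using hk)]
        rw [hkk, hprevval]
        simp only [hBdef, Matrix.of_apply, smul_eq_mul]
        rw [if_pos (by simp)]
        show ψ (((k : ℕ) : ℤ) + 1) i = φ (k : ℤ) i + -σ * ψ (k : ℤ) i
        rw [hψs]
        ring
      · rw [updateCol_ne hc]
        have hne2 : (c : ℕ) ≠ k := fun h => hc (Fin.ext h)
        simp only [hBdef, Matrix.of_apply]
        by_cases h1 : (c : ℕ) < k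
        · rw [if_pos (by omega), if_pos h1]
        · rw [if_neg (by omega), if_neg h1]
    rw [hupd]
    exact det_updateCol_add_smul_self (B k) hne (-σ)
  have hBm : ∀ k : ℕ, k ≤ m → (B k).det = (B 0).det := by
    intro k
    induction k with
    | zero => intro _; rfl
    | succ n ih => intro hn; rw [hBstep n (by omega), ih (by omega)]
  -- Step 3: B m is Ψ with cyclically permuted columns
  have hBrot : B m = Ψ.submatrix id (finRotate (m + 1)) := by
    ext i c
    simp only [submatrix_apply, id_eq, finRotate_succ_apply, hΨdef, hBdef,
      Matrix.of_apply]
    by_cases hc : (c : ℕ) < m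
    · rw [if_pos hc]
      have hval : ((c + 1 : Fin (m + 1)) : ℕ) = (c : ℕ) + 1 := by
        rw [Fin.val_add_one]
        rw [if_neg]
        intro h
        have := congrArg Fin.val h
        simp [Fin.last] at this; omega
      rw [hval]
      push_cast
      ring_nf
    · rw [if_neg hc, if_neg hc]
      have hcm : (c : ℕ) = m := by have := c.isLt; omega
      have hval : ((c + 1 : Fin (m + 1)) : ℕ) = 0 := by
        rw [Fin.val_add_one]
        rw [if_pos (Fin.ext hcm : c = Fin.last m)]
      rw [hval]
      norm_num
  have hbase : (M 0).det = (-1 : ℂ) ^ m * Ψ.det := by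
    rw [← hB0, ← hBm m le_rfl, hBrot, det_permute', sign_finRotate]
    push_cast
    ring
  -- Final assembly
  intro j hj
  have hjm : j ≤ m := by omega
  show σ ^ j * Ψ.det = (-1 : ℂ) ^ (m + 1 + 1 - j) * (M j).det
  rw [hM j hjm, hbase]
  have hns : (-σ : ℂ) ^ j = (-1 : ℂ) ^ j * σ ^ j := by rw [neg_pow]
  rw [hns]
  have key : (-1 : ℂ) ^ (m + 1 + 1 - j) * ((-1 : ℂ) ^ j * (-1 : ℂ) ^ m) = 1 := by
    rw [← pow_add, ← pow_add, show m + 1 + 1 - j + (j + m) = 2 * (m + 1) by omega,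
      pow_mul]
    norm_num
  calc σ ^ j * Ψ.det
      = ((-1 : ℂ) ^ (m + 1 + 1 - j) * ((-1 : ℂ) ^ j * (-1 : ℂ) ^ m)) * (σ ^ j * Ψ.det) := by
        rw [key]; ring
    _ = (-1 : ℂ) ^ (m + 1 + 1 - j) * ((-1 : ℂ) ^ j * σ ^ j * ((-1 : ℂ) ^ m * Ψ.det)) := by
        ring
end
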